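/- arXiv:2310.15703 — 2 statements merged into one kernel-verified Lean document; each statement's English description precedes it below -/
import Mathlib

section
/- Let q be a power of an odd prime p, fix an enumeration F_q = {α_1 = 0, α_2, …, α_q}, set w_i = (α_1^{i−1}, …, α_q^{i−1}) ∈ F_q^q (0^0 = 1), a_ℓ = w_ℓ for 1 ≤ ℓ ≤ q−1, a_q = w_q + λ w_1 with λ = (p−1)/2 in F_q, and let Ȧ be the q×q matrix over F_q whose rows are a_1,…,a_q. Then Ȧ is non-singular by columns (NSC), and Ȧ Ȧ^t is the anti-diagonal matrix whose (i,j) entry equals −1 when i + j = q + 1 and 0 otherwise; in particular Ȧ Ȧ^t is a monomial matrix with respect to the permutation σ(j) = q − j + 1. -/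
/-- Minimum distance (minimum Hamming weight of a nonzero element) of a set of vectors. -/
noncomputable def dminS {F : Type*} [DecidableEq F] [Zero F] {n : Type*} [Fintype n]
    (C : Set (n → F)) : ℕ :=
  sInf { w | ∃ c ∈ C, c ≠ 0 ∧ hammingNorm c = w }

/-- Euclidean dual of a set of vectors. -/
def dualE {F : Type*} [Field F] {n : Type*} [Fintype n] (C : Set (n → F)) : Set (n → F) :=
  { x | ∀ c ∈ C, ∑ j, x j * c j = 0 }

/-- Hermitian dual (with respect to x ↦ x^q) of a set of vectors over F_{q^2}. -/
def dualH {F : Type*} [Field F] {n : Type*} [Fintype n] (q : ℕ) (C : Set (n → F)) :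
    Set (n → F) :=
  { x | ∀ c ∈ C, ∑ j, x j * (c j) ^ q = 0 }

/-- The matrix-product code `[C_1,…,C_s]·A` as a set of vectors indexed by `Fin h × Fin m`. -/
def mpcSet {F : Type*} [Field F] {s h m : ℕ}
    (C : Fin s → Set (Fin m → F)) (A : Matrix (Fin s) (Fin h) F) :
    Set (Fin h × Fin m → F) :=
  { p | ∃ v : Fin s → Fin m → F, (∀ i, v i ∈ C i) ∧ ∀ x, p x = ∑ i, A i x.1 * v i x.2 }

/-- A matrix is non-singular by columns. -/
def IsNSC {F : Type*} [Field F] {s h : ℕ} (A : Matrix (Fin s) (Fin h) F) : Prop :=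
  ∀ (i : ℕ) (hi : i ≤ s), 0 < i → ∀ c : Fin i → Fin h, StrictMono c →
    (Matrix.of fun r t : Fin i => A (Fin.castLE hi r) (c t)).det ≠ 0

/-- Punctured code: projection of `C` onto the coordinates in `R`. -/
def punct {F : Type*} {n : Type*} (C : Set (n → F)) (R : Finset n) :
    Set ({x // x ∈ R} → F) :=
  (fun c (t : {x // x ∈ R}) => c t.1) '' C

/-- `R` is an (r,δ)-extended recovery set for coordinate `i` of the code `C`. -/
def IsRecSet {F : Type*} [DecidableEq F] [Zero F] {n : Type*} [Fintype n]
    (C : Set (n → F)) (r δ : ℕ) (i : n) (R : Finset n) : Prop :=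
  i ∈ R ∧ R.card ≤ r + δ - 1 ∧ δ ≤ dminS (punct C R)

/-- `C` is a locally recoverable code with locality (r,δ). -/
def IsLRC {F : Type*} [DecidableEq F] [Zero F] {n : Type*} [Fintype n]
    (C : Set (n → F)) (r δ : ℕ) : Prop :=
  ∀ i : n, ∃ R : Finset n, IsRecSet C r δ i R

/-- `wv α i` is the evaluation of the monomial `X^(i-1)` at all points of the field,
enumerated by `α`. -/
def wv {F : Type*} [Field F] {q : ℕ} (α : Fin q ≃ F) (i : ℕ) : Fin q → F :=
  fun j => (α j) ^ (i - 1)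

/-- `av α p i` : the vectors `a_i`, with `a_i = w_i` for `i < q` and
`a_q = w_q + ((p-1)/2) • w_1`. -/
def av {F : Type*} [Field F] {q : ℕ} (α : Fin q ≃ F) (p : ℕ) (i : ℕ) : Fin q → F :=
  if i = q then wv α q + (((p - 1) / 2 : ℕ) : F) • wv α 1 else wv α i

/-- The square matrix whose rows are `a_1, …, a_q`. -/
def Adot {F : Type*} [Field F] {q : ℕ} (α : Fin q ≃ F) (p : ℕ) : Matrix (Fin q) (Fin q) F :=
  Matrix.of fun r j => av α p ((r : ℕ) + 1) j

/-!
Row `r` of `Ȧ` evaluates `X ^ r` at the points of `F_q`, plus the constant `λ` in the last row.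
Hence the entries of `Ȧ Ȧᵀ` are combinations of power sums `∑ x ^ k` with `k ≤ 2 (q - 1)`,
which vanish except at `k = q - 1` and `k = 2 (q - 1)`, where they equal `-1`; the choice
`2 λ = -1` cancels the corner entry. A leading square submatrix of `Ȧ` is a Vandermonde matrix,
up to adding `λ` times its first row to its last, which does not change the determinant.
-/

namespace FiniteField

open Finset

variable {K : Type*} [Field K] [Fintype K]

theorem sum_pow_eq_sum_units_pow [DecidableEq K] {k : ℕ} (hk : k ≠ 0) :
    ∑ x : K, x ^ k = ∑ u : Kˣ, (u : K) ^ k := by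
  rw [← sum_erase univ (zero_pow hk), sum_subtype _ (p := (· ≠ 0)) (fun x => by simp)]
  exact Fintype.sum_equiv unitsEquivNeZero.symm _ _ (fun _ => rfl)

theorem sum_pow_of_le_two_mul {k : ℕ} (hk : k ≤ 2 * (Fintype.card K - 1)) :
    ∑ x : K, x ^ k =
      if k = Fintype.card K - 1 ∨ k = 2 * (Fintype.card K - 1) then -1 else 0 := by
  classical
  have h2 : 2 ≤ Fintype.card K := Fintype.one_lt_card
  rcases Nat.eq_zero_or_pos k with rfl | hk0
  · rw [sum_pow_lt_card_sub_one _ _ (by omega), if_neg (by omega)]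
  rw [sum_pow_eq_sum_units_pow hk0.ne', sum_pow_units]
  refine if_congr ⟨fun ⟨c, hc⟩ => ?_, ?_⟩ rfl rfl
  · have hc2 : c ≤ 2 := by
      by_contra! hc3
      have := Nat.mul_le_mul_left (Fintype.card K - 1) hc3
      omega
    interval_cases c <;> omega
  · rintro (rfl | rfl)
    exacts [dvd_rfl, dvd_mul_left _ _]

theorem sum_pow_add_mul_pow_add (a b : ℕ) (c d : K) :
    ∑ x : K, (x ^ a + c) * (x ^ b + d) =
      ∑ x : K, x ^ (a + b) + d * ∑ x : K, x ^ a + c * ∑ x : K, x ^ b := by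
  simp only [add_mul, mul_add, sum_add_distrib, ← mul_sum, ← sum_mul, pow_add]
  simp only [sum_const, card_univ, nsmul_eq_mul, Nat.cast_card_eq_zero, zero_mul]
  ring

end FiniteField

theorem two_mul_cast_pred_div_two {R : Type*} [CommRing R] {p : ℕ} (hp : Odd p)
    (hpR : (p : R) = 0) : 2 * (((p - 1) / 2 : ℕ) : R) = -1 := by
  obtain ⟨m, rfl⟩ := hp
  rw [show (2 * m + 1 - 1) / 2 = m by omega]
  push_cast at hpR
  linear_combination hpR

section Adot

variable {F : Type*} [Field F] {q : ℕ} (α : Fin q ≃ F) (p : ℕ)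

open Matrix FiniteField

theorem Adot_apply (r x : Fin q) :
    Adot α p r x =
      α x ^ (r : ℕ) + if (r : ℕ) + 1 = q then (((p - 1) / 2 : ℕ) : F) else 0 := by
  simp only [Adot, av, of_apply]
  split_ifs with h
  · simp [wv, ← h]
  · simp [wv]

theorem Adot_mul_transpose_apply [Fintype F] (hhalf : 2 * (((p - 1) / 2 : ℕ) : F) = -1)
    (i j : Fin q) :
    (Adot α p * (Adot α p).transpose) i j = if (i : ℕ) + (j : ℕ) + 1 = q then -1 else 0 := by
  have hcard : Fintype.card F = q := by simpa using (Fintype.card_congr α).symm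
  have hq : 2 ≤ q := hcard ▸ Fintype.one_lt_card
  have hi := i.isLt
  have hj := j.isLt
  simp only [mul_apply, transpose_apply, Adot_apply]
  rw [Equiv.sum_comp α (fun y => (y ^ (i : ℕ) + _) * (y ^ (j : ℕ) + _)),
    sum_pow_add_mul_pow_add, sum_pow_of_le_two_mul (by omega), sum_pow_of_le_two_mul (by omega),
    sum_pow_of_le_two_mul (by omega), hcard]
  split_ifs <;> first | omega | linear_combination -hhalf | ring

theorem isNSC_Adot : IsNSC (Adot α p) := by
  intro i hi _ c hc
  set V := (vandermonde fun t => α (c t))ᵀ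
  have hV : V.det ≠ 0 := by
    rw [det_transpose]
    exact det_vandermonde_ne_zero_iff.mpr (α.injective.comp hc.injective)
  have hrow (r u : Fin i) : Adot α p (Fin.castLE hi r) (c u) =
      V r u + if (r : ℕ) + 1 = q then (((p - 1) / 2 : ℕ) : F) else 0 := by
    simp [V, Adot_apply]
  rcases hi.lt_or_eq with hlt | rfl
  · convert hV using 2
    ext r u
    rw [of_apply, hrow, if_neg (by omega), add_zero]
  · have hq : 2 ≤ i := by
      have := α.nontrivial
      exact Fin.nontrivial_iff_two_le.mp inferInstance
    let last : Fin i := ⟨i - 1, by omega⟩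
    let first : Fin i := ⟨0, by omega⟩
    have hne : last ≠ first := Fin.ne_of_val_ne (show i - 1 ≠ 0 by omega)
    rw [← det_updateRow_add_smul_self V hne (((p - 1) / 2 : ℕ) : F)] at hV
    convert hV using 2
    ext r u
    rw [of_apply, hrow]
    by_cases hr : r = last
    · rw [hr, updateRow_self, if_pos (show (last : ℕ) + 1 = i by simp only [last]; omega)]
      simp [V, first, vandermonde]
    · have hr' : (r : ℕ) + 1 ≠ i := fun h => hr (Fin.ext (show (r : ℕ) = i - 1 by omega))
      rw [updateRow_ne hr, if_neg hr', add_zero]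

end Adot

theorem stmt7_general {F : Type*} [Field F] [Fintype F] {p n q : ℕ}
    (hp : p.Prime) (hodd : p ≠ 2) (hq : q = p ^ n)
    (α : Fin q ≃ F) :
    IsNSC (Adot α p) ∧
    (∀ i j : Fin q, (Adot α p * (Adot α p).transpose) i j =
      if (i : ℕ) + (j : ℕ) + 1 = q then -1 else 0) ∧
    (∃ d : Fin q → F, (∀ i, d i ≠ 0) ∧
      ∀ i j : Fin q, (Adot α p * (Adot α p).transpose) i j =
        if Fin.rev j = i then d i else 0) := by
  have hpF : (p : F) = 0 := eq_zero_of_pow_eq_zero (n := n) <| by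
    rw [← Nat.cast_pow, ← hq, ← Fintype.card_fin q, Fintype.card_congr α,
      FiniteField.cast_card_eq_zero]
  have hprod :=
    Adot_mul_transpose_apply α p (two_mul_cast_pred_div_two (hp.odd_of_ne_two hodd) hpF)
  refine ⟨isNSC_Adot α p, hprod, fun _ => -1, fun _ => neg_ne_zero.mpr one_ne_zero,
    fun i j => ?_⟩
  rw [hprod]
  exact if_congr (by rw [Fin.ext_iff, Fin.val_rev]; omega) rfl rfl

/-- the matrix `Ȧ` with rows `a_1,…,a_q` is NSC and `Ȧ Ȧᵀ` is the
anti-diagonal matrix with `-1` on the anti-diagonal; in particular `Ȧ Ȧᵀ` is monomial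
with respect to the permutation `σ(j) = q - j + 1`. -/
theorem stmt7 {F : Type*} [Field F] [Fintype F] {p n q : ℕ}
    (hp : p.Prime) (hodd : p ≠ 2) (hn : 0 < n) (hq : q = p ^ n)
    (hcard : Fintype.card F = q) (hqpos : 0 < q)
    (α : Fin q ≃ F) (h0 : α ⟨0, hqpos⟩ = 0) :
    IsNSC (Adot α p) ∧
    (∀ i j : Fin q, (Adot α p * (Adot α p).transpose) i j =
      if (i : ℕ) + (j : ℕ) + 1 = q then -1 else 0) ∧
    (∃ d : Fin q → F, (∀ i, d i ≠ 0) ∧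
      ∀ i j : Fin q, (Adot α p * (Adot α p).transpose) i j =
        if Fin.rev j = i then d i else 0) :=
  stmt7_general hp hodd hq α
end

section
/- Let F_q be a finite field of odd characteristic and let h, s be positive integers such that h − 1 divides q − 1, 1 − h is a square in F_q, and s ≤ h < 2s. Let C_1,…,C_s be nonzero linear codes in F_q^m with dim(C_i) = k_i and minimum distance d_i, satisfying C_{h−s+1} ⊇ C_{h−s+2} ⊇ ⋯ ⊇ C_s ⊇ C_s^{⊥E}, and C_1 = ⋯ = C_{h−s} = F_q^m whenever s < h. Then there exists a non-singular by columns (NSC) s×h matrix Ȧ over F_q such that the matrix-product code C = [C_1,…,C_s]·Ȧ is Euclidean dual-containing, has length hm, dimension Σ_{i=1}^s k_i, and minimum distance d(C) ≥ min{ h d_1, (h−1) d_2, …, (h+1−s) d_s }. -/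
/-!
Write `h = n + 1` and pad the family by zero codes `C_s = ⋯ = C_n = 0`; the code is then
`[C_0, …, C_n]·Ā` for a square matrix `Ā` whose first `s` rows form `A`. If `T (Ā Āᵀ) = 1`, every
word `x` of the Euclidean dual is `Āᵀ T (Ā x)`, and the rows of `Ā x` lie in the duals `C_iᗮ`.
So the code is dual-containing as soon as `T k i ≠ 0` forces `C_iᗮ ⊆ C_k`, which the hypotheses
on the `C_i` give whenever `k + i ≤ n`.

Such an `Ā` is the Vandermonde matrix of the nodes `0, 1, ζ, …, ζ^(n-1)` (`ζ` a primitive `n`-th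
root of unity, which exists as `n ∣ q - 1`) with first row replaced by `1 + (γ - 1) x^n`, where
`γ = β / n` satisfies `n γ² = -1`. Power sums over the nodes show that `Ā Āᵀ` is, up to its
corners, `n` times the reversal matrix, and its inverse is supported on `k + i ≤ n`. The leading
minors of `Ā` are Vandermonde determinants, so `Ā` is NSC, and the distance bound is the usual
one for NSC matrices: in each coordinate where the last nonzero component `v_t` of a codeword is
nonzero, the codeword has at least `h - t` nonzero entries.
-/

open Matrix

lemma dualE_anti {F : Type*} [Field F] {n : Type*} [Fintype n] {C D : Set (n → F)} (h : C ⊆ D) :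
    dualE D ⊆ dualE C :=
  fun _ hx c hc => hx c (h hc)

lemma eq_zero_of_mem_dualE_top {F : Type*} [Field F] {n : Type*} [Fintype n] [DecidableEq n]
    {x : n → F} (hx : x ∈ dualE ((⊤ : Submodule F (n → F)) : Set (n → F))) : x = 0 := by
  ext y
  simpa [Pi.single_apply] using hx (Pi.single y 1) trivial

section MatrixProductCode

variable {F : Type*} [Field F] {κ ι n : Type*} [Fintype κ]

def mpcMap (A : Matrix κ ι F) (D : κ → Submodule F (n → F)) : (Π k, D k) →ₗ[F] (ι × n → F) where
  toFun v x := ∑ k, A k x.1 * (v k : n → F) x.2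
  map_add' v w := by
    ext x
    simp [mul_add, Finset.sum_add_distrib]
  map_smul' c v := by
    ext x
    simp [Finset.mul_sum, mul_left_comm]

def mpcCode (A : Matrix κ ι F) (D : κ → Submodule F (n → F)) : Submodule F (ι × n → F) :=
  LinearMap.range (mpcMap A D)

lemma mpcMap_apply (A : Matrix κ ι F) (D : κ → Submodule F (n → F)) (v : Π k, D k) (x : ι × n) :
    mpcMap A D v x = ∑ k, A k x.1 * (v k : n → F) x.2 := rfl

lemma mem_mpcCode {A : Matrix κ ι F} {D : κ → Submodule F (n → F)} {p : ι × n → F} :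
    p ∈ mpcCode A D ↔ ∃ V : κ → n → F, (∀ k, V k ∈ D k) ∧ ∀ x, p x = ∑ k, A k x.1 * V k x.2 := by
  constructor
  · rintro ⟨v, rfl⟩
    exact ⟨fun k => v k, fun k => (v k).2, fun x => rfl⟩
  · rintro ⟨V, hV, hp⟩
    exact ⟨fun k => ⟨V k, hV k⟩, funext fun x => (hp x).symm⟩

lemma coe_mpcCode {s h m : ℕ} (A : Matrix (Fin s) (Fin h) F) (C : Fin s → Submodule F (Fin m → F)) :
    (mpcCode A C : Set (Fin h × Fin m → F)) = mpcSet (fun i => (C i : Set (Fin m → F))) A :=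
  Set.ext fun _ => mem_mpcCode

lemma mpcCode_extend {κ' : Type*} [Fintype κ'] {e : κ → κ'} (he : Function.Injective e)
    (A : Matrix κ' ι F) (D : κ → Submodule F (n → F)) :
    mpcCode A (Function.extend e D ⊥) = mpcCode (A.submatrix e id) D := by
  have off_range : ∀ k ∉ Set.range e, Function.extend e D ⊥ k = ⊥ := fun k hk =>
    Function.extend_apply' _ _ _ fun ⟨i, hi⟩ => hk ⟨i, hi⟩
  ext p
  simp only [mem_mpcCode, submatrix_apply, id]
  constructor
  · rintro ⟨V, hV, hp⟩
    refine ⟨V ∘ e, fun i => ?_, fun x => (hp x).trans ?_⟩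
    · simpa [he.extend_apply] using hV (e i)
    · refine (Fintype.sum_of_injective e he _ _ (fun k hk => ?_) fun _ => rfl).symm
      simp [(Submodule.mem_bot F).mp (off_range k hk ▸ hV k)]
  · rintro ⟨V, hV, hp⟩
    refine ⟨Function.extend e V 0, fun k => ?_, fun x => (hp x).trans ?_⟩
    · by_cases hk : k ∈ Set.range e
      · obtain ⟨i, rfl⟩ := hk
        simpa [he.extend_apply] using hV i
      · simp [off_range k hk, Function.extend_apply' _ _ _ fun ⟨i, hi⟩ => hk ⟨i, hi⟩]
    · refine Fintype.sum_of_injective e he _ _ (fun k hk => ?_) fun i => by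
        simp [he.extend_apply]
      simp [Function.extend_apply' _ _ _ fun ⟨i, hi⟩ => hk ⟨i, hi⟩]

lemma sum_mul_mpcMap [Fintype ι] [Fintype n] (A : Matrix κ ι F) (D : κ → Submodule F (n → F))
    (x : ι × n → F) (v : Π k, D k) :
    ∑ p, x p * mpcMap A D v p = ∑ k, ∑ y, (A * of fun j y => x (j, y)) k y * (v k : n → F) y := by
  simp only [mpcMap_apply, Fintype.sum_prod_type, mul_apply, of_apply, Finset.mul_sum,
    Finset.sum_mul]
  rw [Finset.sum_congr rfl fun j _ => Finset.sum_comm, Finset.sum_comm]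
  refine Finset.sum_congr rfl fun k _ => ?_
  rw [Finset.sum_comm]
  exact Finset.sum_congr rfl fun y _ => Finset.sum_congr rfl fun j _ => by ring

variable [Fintype ι] [DecidableEq ι]

lemma mpcMap_injective {A : Matrix ι ι F} (hA : IsUnit A.det) (D : ι → Submodule F (n → F)) :
    Function.Injective (mpcMap A D) := by
  rw [← LinearMap.ker_eq_bot, LinearMap.ker_eq_bot']
  intro v hv
  have hAv : Aᵀ * of (fun k => (v k : n → F)) = 0 := by
    ext j y
    simpa [mul_apply, mul_comm, mpcMap_apply] using congrFun hv (j, y)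
  have hv0 : of (fun k => (v k : n → F)) = 0 := by
    rw [← Matrix.one_mul (of fun k => (v k : n → F)),
      ← nonsing_inv_mul _ (isUnit_det_transpose A hA), Matrix.mul_assoc, hAv, Matrix.mul_zero]
  ext k y
  exact congrFun (congrFun hv0 k) y

lemma finrank_mpcCode [Fintype n] {A : Matrix ι ι F} (hA : IsUnit A.det)
    (D : ι → Submodule F (n → F)) :
    Module.finrank F (mpcCode A D) = ∑ k, Module.finrank F (D k) := by
  rw [mpcCode, LinearMap.finrank_range_of_inj (mpcMap_injective hA D), Module.finrank_pi_fintype]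

lemma finrank_mpcCode_submatrix [Fintype n] {e : κ → ι} (he : Function.Injective e)
    {A : Matrix ι ι F} (hA : IsUnit A.det) (D : κ → Submodule F (n → F)) :
    Module.finrank F (mpcCode (A.submatrix e id) D) = ∑ i, Module.finrank F (D i) := by
  rw [← mpcCode_extend he, finrank_mpcCode hA]
  refine (Fintype.sum_of_injective e he _ _ (fun k hk => ?_) fun i => by
    rw [he.extend_apply]).symm
  rw [Function.extend_apply' _ _ _ fun ⟨i, hi⟩ => hk ⟨i, hi⟩]
  exact finrank_bot F _

theorem dualE_mpcCode_subset [Fintype n] {A T : Matrix ι ι F} (hT : T * (A * Aᵀ) = 1)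
    {D : ι → Submodule F (n → F)}
    (hD : ∀ k i, T k i ≠ 0 → dualE (D i : Set (n → F)) ⊆ D k) :
    dualE (mpcCode A D : Set (ι × n → F)) ⊆ mpcCode A D := by
  intro x hx
  set X : Matrix ι n F := of fun j y => x (j, y)
  have hAX : ∀ i, (A * X) i ∈ dualE (D i : Set (n → F)) := by
    intro i c hc
    have := hx _ ⟨Pi.single i ⟨c, hc⟩, rfl⟩
    rw [sum_mul_mpcMap, Finset.sum_eq_single i
      (fun k _ hk => by simp [Pi.single_eq_of_ne hk]) (by simp)] at this
    simpa using this
  have hinv : Aᵀ * (T * A) = 1 := mul_eq_one_comm.mp (by rw [Matrix.mul_assoc, hT])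
  rw [SetLike.mem_coe, mem_mpcCode]
  refine ⟨T * (A * X), fun k => ?_, fun ⟨j, y⟩ => ?_⟩
  · have : (T * (A * X)) k = ∑ i, T k i • (A * X) i := by
      ext y
      simp [mul_apply]
    rw [this]
    refine Submodule.sum_mem _ fun i _ => ?_
    by_cases hki : T k i = 0
    · simp [hki]
    · exact Submodule.smul_mem _ _ (hD k i hki (hAX i))
  · have : x (j, y) = (Aᵀ * (T * A) * X) j y := by simp [hinv, X]
    rw [this, Matrix.mul_assoc, Matrix.mul_assoc, mul_apply]
    simp [transpose_apply]

end MatrixProductCode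

section MinimumDistance

open Finset

variable {F : Type*} [Field F] [DecidableEq F]

lemma dminS_le_hammingNorm {n : Type*} [Fintype n] {C : Set (n → F)} {c : n → F} (hc : c ∈ C)
    (hc0 : c ≠ 0) : dminS C ≤ hammingNorm c :=
  Nat.sInf_le ⟨c, hc, hc0, rfl⟩

lemma le_dminS {n : Type*} [Fintype n] {C : Set (n → F)} {b : ℕ} (hC : ∃ c ∈ C, c ≠ 0)
    (hb : ∀ c ∈ C, c ≠ 0 → b ≤ hammingNorm c) : b ≤ dminS C := by
  obtain ⟨c, hc, hc0⟩ := hC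
  exact le_csInf ⟨_, c, hc, hc0, rfl⟩ fun w ⟨c, hc, hc0, hw⟩ => hw ▸ hb c hc hc0

lemma hammingNorm_prod {α β : Type*} [Fintype α] [Fintype β] (p : α × β → F) :
    hammingNorm p = ∑ y, #{j | p (j, y) ≠ 0} := by
  simp only [hammingNorm, card_filter, Fintype.sum_prod_type]
  exact Finset.sum_comm

variable {s h : ℕ} {A : Matrix (Fin s) (Fin h) F}

/-- If `u A` had `t + 1` zero entries, the `(t+1)`-minor of `A` on those columns (first `t + 1`
rows) would kill the nonzero vector `(u_0, …, u_t)`. -/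
theorem IsNSC.sub_le_card_vecMul_ne_zero (hA : IsNSC A) {u : Fin s → F} {t : Fin s}
    (hut : u t ≠ 0) (hu : ∀ i, t < i → u i = 0) :
    h - t ≤ #{j | vecMul u A j ≠ 0} := by
  by_contra! hlt
  have hzeros : (t : ℕ) + 1 ≤ #{j | vecMul u A j = 0} := by
    have := card_filter_add_card_filter_not (s := univ) (p := fun j => vecMul u A j = 0)
    simp only [card_univ, Fintype.card_fin, ← ne_eq] at this
    omega
  obtain ⟨Z, hZ, hZcard⟩ := exists_subset_card_eq hzeros
  have hts : (t : ℕ) + 1 ≤ s := t.isLt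
  set c := Z.orderEmbOfFin hZcard
  have hminor : vecMul (u ∘ Fin.castLE hts) (of fun r k => A (Fin.castLE hts r) (c k)) = 0 := by
    ext k
    have hk : vecMul u A (c k) = 0 := (mem_filter.mp (hZ (Z.orderEmbOfFin_mem hZcard k))).2
    rw [Pi.zero_apply, ← hk]
    refine Fintype.sum_of_injective _ (Fin.castLE_injective hts) _ _ (fun i hi => ?_) fun _ => rfl
    rw [hu i (not_le.mp fun hit => hi ⟨⟨i, by omega⟩, rfl⟩), zero_mul]
  have := congrFun (eq_zero_of_vecMul_eq_zero (hA _ hts t.val.succ_pos c c.strictMono) hminor)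
    (Fin.last t)
  exact hut this

theorem IsNSC.mul_hammingNorm_le_mpcMap (hA : IsNSC A) {n : Type*} [Fintype n]
    {D : Fin s → Submodule F (n → F)} {v : Π i, D i} {t : Fin s}
    (hv : ∀ i, t < i → (v i : n → F) = 0) :
    (h - t) * hammingNorm (v t : n → F) ≤ hammingNorm (mpcMap A D v) := by
  rw [hammingNorm_prod]
  calc (h - t) * hammingNorm (v t : n → F)
      = ∑ y ∈ {y | (v t : n → F) y ≠ 0}, (h - t) := by
        rw [sum_const, smul_eq_mul, mul_comm, hammingNorm]
    _ ≤ ∑ y ∈ {y | (v t : n → F) y ≠ 0}, #{j | mpcMap A D v (j, y) ≠ 0} := by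
        refine sum_le_sum fun y hy => ?_
        have hcol : ∀ j, mpcMap A D v (j, y) = vecMul (fun i => (v i : n → F) y) A j := fun j => by
          simp only [mpcMap_apply, vecMul, dotProduct, mul_comm]
        simp only [hcol]
        exact hA.sub_le_card_vecMul_ne_zero (mem_filter.mp hy).2 fun i hi => by simp [hv i hi]
    _ ≤ ∑ y, #{j | mpcMap A D v (j, y) ≠ 0} := sum_le_sum_of_subset (filter_subset _ _)

theorem IsNSC.le_dminS_mpcCode (hA : IsNSC A) {n : Type*} [Fintype n]
    {D : Fin s → Submodule F (n → F)} (hD : mpcCode A D ≠ ⊥) :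
    sInf {w | ∃ i : Fin s, w = (h - i) * dminS (D i : Set (n → F))} ≤
      dminS (mpcCode A D : Set (Fin h × n → F)) := by
  refine le_dminS (Submodule.exists_mem_ne_zero_of_ne_bot hD) ?_
  rintro _ ⟨v, rfl⟩ hv0
  have hsupp : ({i | (v i : n → F) ≠ 0} : Finset (Fin s)).Nonempty := by
    refine nonempty_iff_ne_empty.mpr fun hempty => hv0 ?_
    have hzero : ∀ i, (v i : n → F) = 0 := by simpa [filter_eq_empty_iff] using hempty
    ext x
    simp [mpcMap_apply, hzero]
  obtain ⟨t, ht, htmax⟩ := exists_max_image _ id hsupp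
  have hvt : (v t : n → F) ≠ 0 := (mem_filter.mp ht).2
  have hv : ∀ i, t < i → (v i : n → F) = 0 := fun i hi =>
    by_contra fun hvi => (htmax i (mem_filter.mpr ⟨mem_univ i, hvi⟩)).not_gt hi
  calc sInf {w | ∃ i : Fin s, w = (h - i) * dminS (D i : Set (n → F))}
      ≤ (h - t) * dminS (D t : Set (n → F)) := Nat.sInf_le ⟨t, rfl⟩
    _ ≤ (h - t) * hammingNorm (v t : n → F) :=
        Nat.mul_le_mul_left _ (dminS_le_hammingNorm (v t).2 hvt)
    _ ≤ hammingNorm (mpcMap A D v) := hA.mul_hammingNorm_le_mpcMap hv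

end MinimumDistance

namespace TwistedVandermonde

variable {F : Type*} [Field F] {n : ℕ} {ζ γ : F}

def node (ζ : F) (n : ℕ) : Fin (n + 1) → F :=
  Fin.cons 0 fun j : Fin n => ζ ^ (j : ℕ)

lemma node_zero : node ζ n 0 = 0 := Fin.cons_zero _ _

lemma node_succ (j : Fin n) : node ζ n j.succ = ζ ^ (j : ℕ) := Fin.cons_succ _ _ _

lemma sum_node_pow (hζ : IsPrimitiveRoot ζ n) (e : ℕ) :
    ∑ j, node ζ n j ^ e = (if e = 0 then 1 else 0) + if n ∣ e then (n : F) else 0 := by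
  rw [Fin.sum_univ_succ, node_zero, zero_pow_eq]
  congr 1
  simp only [node_succ, pow_right_comm _ _ e]
  rw [Fin.sum_univ_eq_sum_range (fun i => (ζ ^ e) ^ i)]
  split_ifs with hdvd
  · simp [(hζ.pow_eq_one_iff_dvd e).mpr hdvd]
  · rw [geom_sum_eq (mt (hζ.pow_eq_one_iff_dvd e).mp hdvd), ← pow_mul, mul_comm, pow_mul,
      hζ.pow_eq_one, one_pow, sub_self, zero_div]

lemma sum_node_pow_of_le (hn : 0 < n) (hζ : IsPrimitiveRoot ζ n) {e : ℕ} (he : e ≤ 2 * n) :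
    ∑ j, node ζ n j ^ e =
      (if e = 0 then 1 else 0) + if e = 0 ∨ e = n ∨ e = 2 * n then (n : F) else 0 := by
  rw [sum_node_pow hζ]
  congr 2
  refine propext ⟨fun ⟨k, hk⟩ => ?_, ?_⟩
  · rcases Nat.lt_or_ge k 3 with hk3 | hk3
    · interval_cases k <;> omega
    · nlinarith
  · rintro (he | he | he) <;> simp [he]

lemma node_injective (hζ : IsPrimitiveRoot ζ n) : Function.Injective (node ζ n) := by
  refine Fin.cons_injective_iff.mpr ⟨fun ⟨j, hj⟩ => ?_, fun i j hij => Fin.ext ?_⟩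
  · exact pow_ne_zero _ (hζ.ne_zero j.pos.ne') hj
  · exact hζ.pow_inj i.isLt j.isLt hij

def twistedVandermonde (ζ γ : F) (n : ℕ) : Matrix (Fin (n + 1)) (Fin (n + 1)) F :=
  of fun r j => node ζ n j ^ (r : ℕ) + (if (r : ℕ) = 0 then γ - 1 else 0) * node ζ n j ^ n

def twistedGram (γ : F) (n : ℕ) : Matrix (Fin (n + 1)) (Fin (n + 1)) F :=
  of fun a b => if (a : ℕ) + b = n then (if (a : ℕ) = 0 ∨ (b : ℕ) = 0 then n * γ else n)
    else if (a : ℕ) = n ∧ (b : ℕ) = n then n else 0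

def twistedGramInv (γ : F) (n : ℕ) : Matrix (Fin (n + 1)) (Fin (n + 1)) F :=
  of fun a b => if (a : ℕ) + b = n then (if (a : ℕ) = 0 ∨ (b : ℕ) = 0 then -γ else (n : F)⁻¹)
    else if (a : ℕ) = 0 ∧ (b : ℕ) = 0 then 1 else 0

lemma twistedVandermonde_mul_transpose (hn : 0 < n) (hζ : IsPrimitiveRoot ζ n)
    (hγ : n * γ ^ 2 = -1) :
    twistedVandermonde ζ γ n * (twistedVandermonde ζ γ n)ᵀ = twistedGram γ n := by
  ext a b
  set ε : ℕ → F := fun r => if r = 0 then γ - 1 else 0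
  have hexpand : ∀ j, twistedVandermonde ζ γ n a j * twistedVandermonde ζ γ n b j =
      node ζ n j ^ ((a : ℕ) + b) + ε b * node ζ n j ^ ((a : ℕ) + n) +
        ε a * node ζ n j ^ (n + (b : ℕ)) + ε a * ε b * node ζ n j ^ (n + n) := by
    intro j
    simp only [twistedVandermonde, of_apply, pow_add, ε]
    ring
  have ha := a.isLt
  have hb := b.isLt
  simp only [mul_apply, transpose_apply, hexpand, Finset.sum_add_distrib, ← Finset.mul_sum]
  rw [sum_node_pow_of_le hn hζ (by omega), sum_node_pow_of_le hn hζ (by omega),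
    sum_node_pow_of_le hn hζ (by omega), sum_node_pow_of_le hn hζ (by omega)]
  simp only [twistedGram, of_apply, ε]
  by_cases ha0 : (a : ℕ) = 0 <;> by_cases hb0 : (b : ℕ) = 0 <;>
    simp [ha0, hb0, hn.ne, hn.ne', two_mul] <;>
    (try split_ifs) <;> first | omega | linear_combination | linear_combination hγ

lemma twistedGramInv_mul_twistedGram (hn : 0 < n) (hγ : n * γ ^ 2 = -1) :
    twistedGramInv γ n * twistedGram γ n = 1 := by
  have hn0 : (n : F) ≠ 0 := fun h => by simp [h] at hγ
  have hsupp : ∀ a k : Fin (n + 1), twistedGramInv γ n a k =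
      (if k = a.rev then (if (a : ℕ) = 0 ∨ (a : ℕ) = n then -γ else (n : F)⁻¹) else 0) +
        if k = 0 then (if (a : ℕ) = 0 then 1 else 0) else 0 := by
    intro a k
    have ha := a.isLt
    simp only [twistedGramInv, of_apply, Fin.ext_iff, Fin.val_rev, Fin.val_zero]
    split_ifs <;> first | omega | simp
  ext a b
  have ha := a.isLt
  have hb := b.isLt
  simp only [mul_apply, hsupp, add_mul, ite_mul, zero_mul, Finset.sum_add_distrib,
    Finset.sum_ite_eq', Finset.mem_univ, if_true]
  simp only [twistedGram, of_apply, one_apply, Fin.ext_iff, Fin.val_rev, Fin.val_zero]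
  simp only [true_or, if_true, one_mul, zero_add, Nat.add_sub_add_right, hn.ne, false_and,
    if_false]
  split_ifs <;> first | omega | linear_combination | linear_combination -hγ | simp [hn0]

lemma twistedVandermonde_apply_of_ne_zero {r : Fin (n + 1)} (hr : (r : ℕ) ≠ 0) (j : Fin (n + 1)) :
    twistedVandermonde ζ γ n r j = node ζ n j ^ (r : ℕ) := by
  simp only [twistedVandermonde, of_apply, if_neg hr, zero_mul, add_zero]

lemma twistedVandermonde_zero_apply (hn : 0 < n) (hζ : IsPrimitiveRoot ζ n) (j : Fin (n + 1)) :
    twistedVandermonde ζ γ n 0 j = if j = 0 then 1 else γ := by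
  obtain rfl | ⟨j, rfl⟩ := Fin.eq_zero_or_eq_succ j
  · simp [twistedVandermonde, node, hn.ne']
  · simp [twistedVandermonde, node, pow_right_comm _ _ n, hζ.pow_eq_one]

lemma add_le_of_twistedGramInv_ne_zero {k i : Fin (n + 1)} (h : twistedGramInv γ n k i ≠ 0) :
    (k : ℕ) + i ≤ n := by
  simp only [twistedGramInv, of_apply] at h
  split_ifs at h <;> first | omega | exact absurd rfl h

/-- All leading minors of `twistedVandermonde` are, up to the factor `γ` or a product of nonzero
nodes, Vandermonde determinants in distinct nodes. -/
theorem isNSC_twistedVandermonde (hn : 0 < n) (hζ : IsPrimitiveRoot ζ n) (hγ : γ ≠ 0) :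
    IsNSC (twistedVandermonde ζ γ n) := by
  intro i hi hi0 c hc
  obtain ⟨i, rfl⟩ : ∃ i', i = i' + 1 := ⟨i - 1, by omega⟩
  obtain ⟨x, hxc⟩ : ∃ x : Fin (i + 1) → F, x = node ζ n ∘ c := ⟨_, rfl⟩
  have hx : Function.Injective x := hxc ▸ (node_injective hζ).comp hc.injective
  have hrow : ∀ r t, r ≠ 0 → twistedVandermonde ζ γ n (Fin.castLE hi r) (c t) = x t ^ (r : ℕ) :=
    fun r t hr => by
      rw [twistedVandermonde_apply_of_ne_zero (r := Fin.castLE hi r) (Fin.val_ne_of_ne hr), hxc]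
      rfl
  by_cases hc0 : c 0 = 0
  · have hx0 : x 0 = 0 := by rw [hxc, Function.comp_apply, hc0, node_zero]
    have hminor : (of fun r t => twistedVandermonde ζ γ n (Fin.castLE hi r) (c t)).submatrix
        Fin.succ Fin.succ = of fun r t => x t.succ * (vandermonde fun t => x t.succ)ᵀ r t := by
      ext r t
      rw [submatrix_apply, of_apply, hrow _ _ (Fin.succ_ne_zero r)]
      simp only [of_apply, transpose_apply, vandermonde_apply, Fin.val_succ, pow_succ']
    rw [det_succ_column_zero, Fin.sum_univ_succ, Finset.sum_eq_zero fun r _ => by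
      rw [of_apply, hrow _ _ (Fin.succ_ne_zero r), hx0]
      simp, Fin.succAbove_zero, hminor, det_mul_row, det_transpose]
    simp only [Fin.val_zero, pow_zero, one_mul, of_apply, Fin.castLE_zero, hc0,
      twistedVandermonde_zero_apply hn hζ, if_true, add_zero]
    exact mul_ne_zero (Finset.prod_ne_zero_iff.mpr fun t _ h =>
        Fin.succ_ne_zero t (hx (h.trans hx0.symm)))
      (det_vandermonde_ne_zero_iff.mpr (hx.comp (Fin.succ_injective _)))
  · have hcol : ∀ t, c t ≠ 0 := fun t h =>
      hc0 (Fin.le_zero_iff.mp (h ▸ hc.monotone (Fin.zero_le t)))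
    have hD : (of fun r t => twistedVandermonde ζ γ n (Fin.castLE hi r) (c t)) =
        of fun r t => (if r = 0 then γ else 1) * (vandermonde x)ᵀ r t := by
      ext r t
      by_cases hr : r = 0
      · simp [hr, twistedVandermonde_zero_apply hn hζ, hcol t]
      · simp [hrow r t hr, hr]
    rw [hD, det_mul_column, Finset.prod_ite_eq' Finset.univ (0 : Fin (i + 1)), det_transpose]
    simpa [hγ] using det_vandermonde_ne_zero_iff.mpr hx

end TwistedVandermonde

open TwistedVandermonde in
theorem exists_isNSC_mul_transpose_inv_antitriangular {F : Type*} [Field F] [Fintype F] {n : ℕ}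
    (hn : n ∣ Fintype.card F - 1) {β : F} (hβ : β ^ 2 = -n) :
    ∃ A T : Matrix (Fin (n + 1)) (Fin (n + 1)) F,
      IsNSC A ∧ T * (A * Aᵀ) = 1 ∧ ∀ k i, T k i ≠ 0 → (k : ℕ) + i ≤ n := by
  rcases Nat.eq_zero_or_pos n with rfl | hn0
  · refine ⟨1, 1, fun i hi hi0 c _ => ?_, by simp, fun k i _ => by omega⟩
    obtain rfl : i = 1 := by omega
    rw [det_unique, of_apply, show c default = Fin.castLE hi default from Fin.ext (by simp),
      one_apply_eq]
    exact one_ne_zero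
  obtain ⟨ζ, hζ⟩ : ∃ ζ : F, IsPrimitiveRoot ζ n := by
    obtain ⟨g, hg⟩ := IsCyclic.exists_ofOrder_eq_natCard (α := Fˣ)
    rw [Nat.card_units, Nat.card_eq_fintype_card] at hg
    obtain ⟨k, hk⟩ := hn
    have hcard : 0 < Fintype.card F - 1 := by have := Fintype.one_lt_card (α := F); omega
    exact ⟨_, IsPrimitiveRoot.coe_units_iff.mpr
      ((hg ▸ IsPrimitiveRoot.orderOf g).pow hcard (hk.trans (mul_comm n k)))⟩
  have hn' : (n : F) ≠ 0 := by
    have : NeZero n := ⟨hn0.ne'⟩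
    exact hζ.neZero'.out
  have hγ : (n : F) * (β / n) ^ 2 = -1 := by
    rw [div_pow, hβ]
    field_simp
  have hγ0 : β / n ≠ 0 := fun h0 => by simp [h0] at hγ
  exact ⟨twistedVandermonde ζ (β / n) n, twistedGramInv (β / n) n,
    isNSC_twistedVandermonde hn0 hζ hγ0, by
      rw [twistedVandermonde_mul_transpose hn0 hζ hγ, twistedGramInv_mul_twistedGram hn0 hγ],
    fun _ _ => add_le_of_twistedGramInv_ne_zero⟩

lemma IsNSC.submatrix_castLE {F : Type*} [Field F] {s h k : ℕ} {A : Matrix (Fin h) (Fin k) F}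
    (hA : IsNSC A) (hsh : s ≤ h) : IsNSC (A.submatrix (Fin.castLE hsh) id) := by
  intro i hi hi0 c hc
  simpa using hA i (hi.trans hsh) hi0 c hc

section PaddedCodes

variable {F : Type*} [Field F] {s h m : ℕ} (hsh : s ≤ h) {C : Fin s → Submodule F (Fin m → F)}

lemma extend_castLE_of_lt {α : Type*} (f : Fin s → α) (g : Fin h → α) {j : Fin h}
    (hj : (j : ℕ) < s) : Function.extend (Fin.castLE hsh) f g j = f ⟨j, hj⟩ :=
  (Fin.castLE_injective hsh).extend_apply f g ⟨j, hj⟩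

/-- For `i < h - s` the dual of `C_i = ⊤` is `0`; for `h - s ≤ i < s` use
`C_iᗮ ⊆ C_{s-1}ᗮ ⊆ C_{s-1} ⊆ C_k`; for `i ≥ s`, `h < 2 s` forces `k < h - s`, so `C_k = ⊤`. -/
theorem dualE_extend_castLE_subset (hh2s : h < 2 * s)
    (hnest : ∀ i j : Fin s, h - s ≤ (i : ℕ) → i ≤ j → C j ≤ C i)
    (hlast : ∀ i : Fin s, (i : ℕ) = s - 1 →
      dualE ((C i : Set (Fin m → F))) ⊆ (C i : Set (Fin m → F)))
    (hfull : ∀ i : Fin s, (i : ℕ) < h - s → C i = ⊤) {k i : Fin h} (hki : (k : ℕ) + i < h) :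
    dualE ((Function.extend (Fin.castLE hsh) C ⊥ i : Submodule F (Fin m → F)) : Set (Fin m → F)) ⊆
      (Function.extend (Fin.castLE hsh) C ⊥ k : Submodule F (Fin m → F)) := by
  by_cases hi_full : (i : ℕ) < h - s
  · rw [extend_castLE_of_lt hsh _ _ (by omega : (i : ℕ) < s), hfull _ hi_full]
    intro x hx
    rw [eq_zero_of_mem_dualE_top hx]
    exact Submodule.zero_mem _
  have hk : (k : ℕ) < s := by omega
  rw [extend_castLE_of_lt hsh _ _ hk]
  by_cases hi : (i : ℕ) < s
  · rw [extend_castLE_of_lt hsh _ _ hi]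
    have hlast_le : ∀ j : Fin s, C ⟨s - 1, by omega⟩ ≤ C j := fun j => by
      by_cases hj : (j : ℕ) < h - s
      · exact hfull j hj ▸ le_top
      · exact hnest j _ (not_lt.mp hj) (Fin.mk_le_mk.mpr (by omega))
    exact fun x hx => hlast_le _ (hlast _ rfl (dualE_anti (hlast_le _) hx))
  · rw [hfull ⟨k, hk⟩ (show (k : ℕ) < h - s by omega)]
    exact fun _ _ => Submodule.mem_top

end PaddedCodes

theorem stmt12_general {F : Type*} [Field F] [Fintype F] [DecidableEq F] {q h s m : ℕ}
    (hcard : Fintype.card F = q)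
    (hs : 0 < s) (hsh : s ≤ h) (hh2s : h < 2 * s)
    (hdvd : (h - 1) ∣ (q - 1)) (hsq : ∃ β : F, β ^ 2 = 1 - (h : F))
    (C : Fin s → Submodule F (Fin m → F)) (k d : Fin s → ℕ)
    (hnz : ∀ i, C i ≠ ⊥)
    (hk : ∀ i, Module.finrank F (C i) = k i)
    (hd : ∀ i, dminS ((C i : Set (Fin m → F))) = d i)
    (hnest : ∀ i j : Fin s, h - s ≤ (i : ℕ) → i ≤ j → C j ≤ C i)
    (hlast : ∀ i : Fin s, (i : ℕ) = s - 1 →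
      dualE ((C i : Set (Fin m → F))) ⊆ (C i : Set (Fin m → F)))
    (hfull : ∀ i : Fin s, (i : ℕ) < h - s → C i = ⊤) :
    ∃ A : Matrix (Fin s) (Fin h) F, IsNSC A ∧
      ∃ S : Submodule F (Fin h × Fin m → F),
        (S : Set (Fin h × Fin m → F)) = mpcSet (fun i => (C i : Set (Fin m → F))) A ∧
        dualE (S : Set (Fin h × Fin m → F)) ⊆ (S : Set (Fin h × Fin m → F)) ∧
        Module.finrank F S = ∑ i, k i ∧
        sInf { v | ∃ i : Fin s, v = (h - (i : ℕ)) * d i } ≤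
          dminS ((S : Set (Fin h × Fin m → F))) := by
  obtain ⟨β, hβ⟩ := hsq
  obtain ⟨n, rfl⟩ : ∃ n, h = n + 1 := ⟨h - 1, by omega⟩
  obtain ⟨Abar, T, hNSC, hT, hTsupp⟩ := exists_isNSC_mul_transpose_inv_antitriangular
    (by simpa [hcard] using hdvd) (β := β) (by rw [hβ]; push_cast; ring)
  have hdet : IsUnit Abar.det := by
    rw [← det_transpose]
    exact isUnit_det_of_left_inverse (B := T * Abar) (by rwa [Matrix.mul_assoc])
  have hrank : Module.finrank F (mpcCode (Abar.submatrix (Fin.castLE hsh) id) C) = ∑ i, k i := by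
    rw [finrank_mpcCode_submatrix (Fin.castLE_injective hsh) hdet]
    exact Finset.sum_congr rfl fun i _ => hk i
  refine ⟨_, hNSC.submatrix_castLE hsh, _, coe_mpcCode _ C, ?_, hrank, ?_⟩
  · rw [← mpcCode_extend (Fin.castLE_injective hsh)]
    exact dualE_mpcCode_subset hT fun a b hab => dualE_extend_castLE_subset hsh hh2s hnest hlast
      hfull (k := a) (i := b) (by have := hTsupp a b hab; omega)
  · have hS : mpcCode (Abar.submatrix (Fin.castLE hsh) id) C ≠ ⊥ := by
      rw [Ne, ← Submodule.finrank_eq_zero, hrank, ← Finset.sum_congr rfl fun i _ => hk i,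
        Finset.sum_eq_zero_iff]
      exact fun h0 => hnz ⟨0, hs⟩ (Submodule.finrank_eq_zero.mp (h0 _ (Finset.mem_univ _)))
    simpa only [← hd] using (hNSC.submatrix_castLE hsh).le_dminS_mpcCode hS

/-- existence of an NSC `s×h` matrix giving a Euclidean dual-containing
matrix-product code, when `h-1 ∣ q-1`, `1-h` is a square and `s ≤ h < 2s`. -/
theorem stmt12 {F : Type*} [Field F] [Fintype F] [DecidableEq F] {q h s m : ℕ}
    (hchar : Odd (ringChar F)) (hcard : Fintype.card F = q)
    (hs : 0 < s) (hsh : s ≤ h) (hh2s : h < 2 * s)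
    (hdvd : (h - 1) ∣ (q - 1)) (hsq : ∃ β : F, β ^ 2 = 1 - (h : F))
    (C : Fin s → Submodule F (Fin m → F)) (k d : Fin s → ℕ)
    (hnz : ∀ i, C i ≠ ⊥)
    (hk : ∀ i, Module.finrank F (C i) = k i)
    (hd : ∀ i, dminS ((C i : Set (Fin m → F))) = d i)
    (hnest : ∀ i j : Fin s, h - s ≤ (i : ℕ) → i ≤ j → C j ≤ C i)
    (hlast : ∀ i : Fin s, (i : ℕ) = s - 1 →
      dualE ((C i : Set (Fin m → F))) ⊆ (C i : Set (Fin m → F)))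
    (hfull : ∀ i : Fin s, (i : ℕ) < h - s → C i = ⊤) :
    ∃ A : Matrix (Fin s) (Fin h) F, IsNSC A ∧
      ∃ S : Submodule F (Fin h × Fin m → F),
        (S : Set (Fin h × Fin m → F)) = mpcSet (fun i => (C i : Set (Fin m → F))) A ∧
        dualE (S : Set (Fin h × Fin m → F)) ⊆ (S : Set (Fin h × Fin m → F)) ∧
        Module.finrank F S = ∑ i, k i ∧
        sInf { v | ∃ i : Fin s, v = (h - (i : ℕ)) * d i } ≤
          dminS ((S : Set (Fin h × Fin m → F))) :=
  stmt12_general hcard hs hsh hh2s hdvd hsq C k d hnz hk hd hnest hlast hfull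
end
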